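/- arXiv:2002.04735 — 6 statements merged into one kernel-verified Lean document; each statement's English description precedes it below -/
import Mathlib

section
/- Let q = 2^k for some integer k ≥ 1 and let 𝔽_q be the field with q elements. Then every element of SL(2, 𝔽_q) is conjugate within SL(2, 𝔽_q) to its own inverse; equivalently, every conjugacy class of SL(2, 𝔽_q) coincides with the real conjugacy class of its elements. -/
/-!
Over any commutative ring, `g⁻¹ = adj g` is conjugate to `gᵀ` by the rotation `!![0, -1; 1, 0]`.
In characteristic `2` the symmetric matrix `m = !![0, 1; 1, (d - a) / c]` has determinant
`-1 = 1` and satisfies `m g = gᵀ m` whenever the entry `c` of `g = !![a, b; c, d]` is nonzero;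
transposing handles `b ≠ 0`, and a diagonal `g` equals its transpose. Hence `g ~ gᵀ ~ g⁻¹`.
-/

open scoped MatrixGroups

namespace Matrix.SpecialLinearGroup

variable {n R : Type*} [Fintype n] [DecidableEq n] [CommRing R]

theorem isConj_of_coe_mul_eq {g h m : SpecialLinearGroup n R}
    (hm : (m : Matrix n n R) * g = h * m) : IsConj g h :=
  ⟨toUnits m, Subtype.ext hm⟩

theorem isConj_transpose_inv_fin_two (g : SL(2, R)) : IsConj gᵀ g⁻¹ := by
  refine isConj_of_coe_mul_eq (m := ⟨!![0, -1; 1, 0], by simp [det_fin_two_of]⟩) ?_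
  rw [coe_transpose, coe_inv, adjugate_fin_two]
  ext i j
  fin_cases i <;> fin_cases j <;> simp [mul_apply, Fin.sum_univ_two]

variable {F : Type*} [Field F] [CharP F 2]

theorem isConj_transpose_of_apply_one_zero_ne_zero (g : SL(2, F))
    (hc : g 1 0 ≠ 0) : IsConj g gᵀ := by
  obtain ⟨z, hz⟩ : ∃ z, g 0 0 + g 1 0 * z = g 1 1 :=
    ⟨(g 1 1 - g 0 0) / g 1 0, by field_simp; ring⟩
  refine isConj_of_coe_mul_eq
    (m := ⟨!![0, 1; 1, z], by simp [det_fin_two_of, CharTwo.neg_eq]⟩) ?_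
  rw [coe_transpose]
  ext i j
  fin_cases i <;> fin_cases j <;> simp [mul_apply, Fin.sum_univ_two] <;> grind

theorem isConj_transpose_fin_two (g : SL(2, F)) : IsConj g gᵀ := by
  by_cases hc : g 1 0 = 0
  · by_cases hb : g 0 1 = 0
    · suffices gᵀ = g by rw [this]
      ext i j
      fin_cases i <;> fin_cases j <;> simp [hb, hc]
    · exact (isConj_transpose_of_apply_one_zero_ne_zero gᵀ hb).symm
  · exact isConj_transpose_of_apply_one_zero_ne_zero g hc

theorem isConj_inv_fin_two (g : SL(2, F)) : IsConj g g⁻¹ :=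
  (isConj_transpose_fin_two g).trans (isConj_transpose_inv_fin_two g)

end Matrix.SpecialLinearGroup

theorem statement5_general (F : Type) [Field F] [Fintype F] (k : ℕ)
    (hcard : Fintype.card F = 2 ^ k) :
    ∀ g : Matrix.SpecialLinearGroup (Fin 2) F, IsConj g g⁻¹ := by
  have : CharP F 2 := charP_of_card_eq_prime_pow hcard
  exact Matrix.SpecialLinearGroup.isConj_inv_fin_two

theorem statement5 (F : Type) [Field F] [Fintype F] (k : ℕ) (hk : 1 ≤ k)
    (hcard : Fintype.card F = 2 ^ k) :
    ∀ g : Matrix.SpecialLinearGroup (Fin 2) F, IsConj g g⁻¹ :=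
  statement5_general F k hcard
end

section
/- Let q be a prime power and let 𝔽_q be the field with q elements. The induction homomorphism Ind : R(SL(2, 𝔽_q)) → R(GL(2, 𝔽_q)) between the complex representation groups is injective if and only if q is a power of 2. -/
/-!
STATEMENT 7: Let `q` be a prime power and let `𝔽_q` be the field with `q` elements. The
induction homomorphism `Ind : R(SL(2, 𝔽_q)) → R(GL(2, 𝔽_q))` between the complex
representation groups is injective if and only if `q` is a power of `2`.

Here `𝔽_q` is formalized as an arbitrary finite field `F` with `q = Fintype.card F` elements
(the cardinality of a finite field is automatically a prime power), `SL(2, F)` is regarded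
as a subgroup of `GL(2, F)` via the range of the canonical embedding `toGL`, `R(K)` is
realized as the additive subgroup of `K → ℂ` generated by the characters of
finite-dimensional complex representations of `K` (the group of virtual characters), and
the induction homomorphism is given on characters by the Frobenius induced character
formula. -/

open scoped Classical

/-- The Frobenius induction of class functions, as an additive homomorphism
`(H → ℂ) →+ (G → ℂ)`. On characters this is the induced character formula. -/
noncomputable def inductionHom {G : Type} [Group G] [Fintype G] (H : Subgroup G) :
    (↥H → ℂ) →+ (G → ℂ) where
  toFun f := fun g =>
    (Nat.card ↥H : ℂ)⁻¹ * ∑ x : G, if h : x⁻¹ * g * x ∈ H then f ⟨x⁻¹ * g * x, h⟩ else 0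
  map_zero' := by
    funext g
    simp
  map_add' f₁ f₂ := by
    funext g
    simp only [Pi.add_apply]
    rw [← mul_add, ← Finset.sum_add_distrib]
    congr 1
    refine Finset.sum_congr rfl fun x _ => ?_
    split
    · rfl
    · simp

/-- The complex representation group `R(K)` of a finite group `K`, realized as the group of
virtual characters: the additive subgroup of `K → ℂ` generated by the characters of
finite-dimensional complex representations of `K`. -/
noncomputable def complexRepGroup (K : Type) [Group K] : AddSubgroup (K → ℂ) :=
  AddSubgroup.closure {f : K → ℂ | ∃ V : FDRep ℂ K, f = V.character}

/-- `SL(2, F)` as a subgroup of `GL(2, F)`. -/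
def SL2subgroup (F : Type) [CommRing F] : Subgroup (GL (Fin 2) F) :=
  (Matrix.SpecialLinearGroup.toGL (n := Fin 2) (R := F)).range

/-!
If `q` is odd, let `ε` be a nonsquare and `σ = diag(ε, 1)`. Inducing from the normal subgroup
`SL₂` is insensitive to twisting by conjugation with `σ`, so if induction is injective on virtual
characters, every character of `SL₂` takes the same value at `u = [[1, 1], [0, 1]]` and at
`σ u σ⁻¹ = [[1, ε], [0, 1]]`. Characters separate conjugacy classes: the difference of the two
class sums is central in `ℂ[SL₂]` and has trace zero on every simple module, so by Schur's lemma it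
kills every simple module, hence vanishes as `ℂ[SL₂]` is semisimple. Thus `u` and `σ u σ⁻¹` are
conjugate in `SL₂`, which forces `ε` to be a square.

If `q` is even, every determinant is a square, so `GL₂ = Z(GL₂) · SL₂`. Then every class function
`f` of `SL₂` is `GL₂`-invariant, and `Ind f` restricts to `[GL₂ : SL₂] • f` on `SL₂`.
-/

universe u

theorem IsSimpleModule.smul_eq_zero_of_mem_center_of_trace_eq_zero {k A M : Type*} [Field k]
    [IsAlgClosed k] [CharZero k] [Ring A] [Algebra k A] [AddCommGroup M] [Module k M]
    [Module A M] [IsScalarTower k A M] [IsSimpleModule A M] [FiniteDimensional k M]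
    {b : A} (hb : b ∈ Set.center A) (htr : LinearMap.trace k M (Algebra.lsmul k k M b) = 0)
    (m : M) : b • m = 0 := by
  obtain ⟨μ, hμ⟩ := (algebraMap_end_bijective_of_isAlgClosed k (A := A) (V := M)).2
    (Module.End.smulLeft b hb)
  have hscalar : Algebra.lsmul k k M b = μ • LinearMap.id := by
    ext m
    exact (LinearMap.congr_fun hμ m).symm
  have : Nontrivial M := IsSimpleModule.nontrivial A M
  rw [hscalar, map_smul, LinearMap.trace_id, smul_eq_mul, mul_eq_zero,
    Nat.cast_eq_zero] at htr
  obtain rfl := htr.resolve_right Module.finrank_pos.ne'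
  simpa using LinearMap.congr_fun hscalar m

theorem IsSemisimpleRing.eq_zero_of_forall_isSimpleModule_smul_eq_zero {A : Type*} [Ring A]
    [IsSemisimpleRing A] {b : A}
    (h : ∀ S : Submodule A A, IsSimpleModule A S → ∀ m : S, b • m = 0) : b = 0 := by
  have hann : b ∈ (⊤ : Submodule A A).annihilator := by
    rw [← IsSemisimpleModule.sSup_simples_eq_top, sSup_eq_iSup', Submodule.annihilator_iSup,
      Submodule.mem_iInf]
    rintro ⟨S, hS⟩
    exact Submodule.mem_annihilator.2 fun m hm => congrArg Subtype.val (h S hS ⟨m, hm⟩)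
  simpa using Submodule.mem_annihilator.1 hann 1 Submodule.mem_top

namespace MonoidAlgebra

variable {k : Type*} [Field k] {K : Type*} [Group K] [Fintype K]

noncomputable def conjSum (x : K) : MonoidAlgebra k K :=
  ∑ t : K, single (t * x * t⁻¹) 1

theorem single_mul_conjSum (g x : K) (r : k) :
    single g r * conjSum x = conjSum x * single g r := by
  simp only [conjSum, Finset.mul_sum, Finset.sum_mul, single_mul_single, one_mul, mul_one]
  refine Fintype.sum_equiv (Equiv.mulLeft g) _ _ fun t => ?_
  simp only [Equiv.coe_mulLeft]
  congr 1
  group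

theorem conjSum_mem_center (x : K) : conjSum (k := k) x ∈ Set.center (MonoidAlgebra k K) := by
  refine Semigroup.mem_center_iff.2 fun a => ?_
  induction a using MonoidAlgebra.induction_linear with
  | zero => simp
  | add a b ha hb => rw [add_mul, mul_add, ha, hb]
  | single g r => exact single_mul_conjSum g x r

theorem coeff_conjSum (x y : K) :
    (conjSum (k := k) x).coeff y = (Finset.univ.filter fun t => t * x * t⁻¹ = y).card := by
  simp [conjSum, coeff_sum, Finset.sum_apply', Finsupp.single_apply]

theorem coeff_conjSum_ne_zero_iff [CharZero k] {x y : K} :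
    (conjSum (k := k) x).coeff y ≠ 0 ↔ IsConj x y := by
  simp [coeff_conjSum, isConj_iff, Finset.card_eq_zero, Finset.filter_eq_empty_iff]

end MonoidAlgebra

open MonoidAlgebra in
theorem Representation.trace_asAlgebraHom_conjSum {k K V : Type*} [Field k] [Group K] [Fintype K]
    [AddCommGroup V] [Module k V] (ρ : Representation k K V) (x : K) :
    LinearMap.trace k V (ρ.asAlgebraHom (conjSum x)) = Fintype.card K * ρ.character x := by
  have hconj (t : K) : LinearMap.trace k V (ρ (t * x * t⁻¹)) = ρ.character x :=
    ρ.char_conj x t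
  simp only [conjSum, map_sum, Representation.asAlgebraHom_single, one_smul, hconj,
    Finset.sum_const, Finset.card_univ, nsmul_eq_mul]

section SeparationOfConjugacyClasses

variable {k K : Type u} [Field k] [IsAlgClosed k] [CharZero k] [Group K] [Fintype K]

theorem MonoidAlgebra.eq_zero_of_mem_center_of_forall_trace_eq_zero {b : MonoidAlgebra k K}
    (hb : b ∈ Set.center (MonoidAlgebra k K))
    (h : ∀ V : FDRep k K, LinearMap.trace k V (Representation.asAlgebraHom V.ρ b) = 0) : b = 0 := by
  refine IsSemisimpleRing.eq_zero_of_forall_isSimpleModule_smul_eq_zero fun S _ => ?_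
  have hρ : Representation.asAlgebraHom (Representation.ofModule' (k := k) (G := K) S) =
      Algebra.lsmul k k S :=
    (MonoidAlgebra.lift k (Module.End k S) K).apply_symm_apply _
  exact IsSimpleModule.smul_eq_zero_of_mem_center_of_trace_eq_zero hb
    (hρ ▸ h (FDRep.of (Representation.ofModule' S)))

open MonoidAlgebra in
theorem FDRep.isConj_of_forall_character_eq {x y : K}
    (h : ∀ V : FDRep k K, V.character x = V.character y) : IsConj x y := by
  have hzero : conjSum (k := k) x - conjSum y = 0 := by
    refine eq_zero_of_mem_center_of_forall_trace_eq_zero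
      ((Subring.center _).sub_mem (conjSum_mem_center x) (conjSum_mem_center y)) fun V => ?_
    rw [map_sub, map_sub, Representation.trace_asAlgebraHom_conjSum,
      Representation.trace_asAlgebraHom_conjSum]
    exact sub_eq_zero.2 (congrArg _ (h V))
  rw [sub_eq_zero] at hzero
  rw [← coeff_conjSum_ne_zero_iff (k := k), hzero, coeff_conjSum_ne_zero_iff]

end SeparationOfConjugacyClasses

theorem inductionHom_apply {G : Type} [Group G] [Fintype G] (H : Subgroup G) (f : H → ℂ) (g : G) :
    inductionHom H f g =
      (Nat.card H : ℂ)⁻¹ * ∑ x : G, if h : x⁻¹ * g * x ∈ H then f ⟨x⁻¹ * g * x, h⟩ else 0 :=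
  rfl

namespace complexRepGroup

theorem apply_conj {K : Type} [Group K] {f : K → ℂ} (hf : f ∈ complexRepGroup K) (a b : K) :
    f (b * a * b⁻¹) = f a := by
  induction hf using AddSubgroup.closure_induction with
  | mem f hf =>
    obtain ⟨V, rfl⟩ := hf
    exact V.char_conj a b
  | zero => rfl
  | add f g _ _ hf hg => simp only [Pi.add_apply, hf, hg]
  | neg f _ hf => simp only [Pi.neg_apply, hf]

theorem comp_mem {K L : Type} [Group K] [Group L] (φ : K →* L) {f : L → ℂ}
    (hf : f ∈ complexRepGroup L) : f ∘ φ ∈ complexRepGroup K := by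
  induction hf using AddSubgroup.closure_induction with
  | mem f hf =>
    obtain ⟨V, rfl⟩ := hf
    exact AddSubgroup.subset_closure ⟨FDRep.of (V.ρ.comp φ), rfl⟩
  | zero => exact AddSubgroup.zero_mem _
  | add f g _ _ hf hg => exact AddSubgroup.add_mem _ hf hg
  | neg f _ hf => exact AddSubgroup.neg_mem _ hf

end complexRepGroup

theorem Subgroup.Normal.inv_mul_mul_mem_iff {G : Type*} [Group G] {H : Subgroup G} (hN : H.Normal)
    (x g : G) : x⁻¹ * g * x ∈ H ↔ g ∈ H := by
  rw [mul_assoc, hN.mem_comm_iff, mul_inv_cancel_right]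

section Normal

variable {G : Type} [Group G] [Fintype G] {H : Subgroup G} [H.Normal]

theorem inductionHom_comp_conjNormal (f : H → ℂ) (σ : G) :
    inductionHom H (f ∘ MulAut.conjNormal σ) = inductionHom H f := by
  funext g
  simp only [inductionHom_apply]
  congr 1
  refine Fintype.sum_equiv (Equiv.mulRight σ⁻¹) _ _ fun x => ?_
  have hmem : x⁻¹ * g * x ∈ H ↔ (x * σ⁻¹)⁻¹ * g * (x * σ⁻¹) ∈ H := by
    rw [‹H.Normal›.inv_mul_mul_mem_iff, ‹H.Normal›.inv_mul_mul_mem_iff]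
  by_cases hx : x⁻¹ * g * x ∈ H
  · rw [dif_pos hx, Equiv.coe_mulRight, dif_pos (hmem.1 hx)]
    exact congrArg f (Subtype.ext (by simp only [MulAut.conjNormal_apply]; group))
  · rw [dif_neg hx, Equiv.coe_mulRight, dif_neg (mt hmem.2 hx)]

theorem inductionHom_apply_coe_of_forall_conjNormal {f : H → ℂ}
    (hf : ∀ (g : G) (h : H), f (MulAut.conjNormal g h) = f h) (h : H) :
    inductionHom H f h = H.index * f h := by
  have hterm (x : G) : (if hx : x⁻¹ * h * x ∈ H then f ⟨x⁻¹ * h * x, hx⟩ else 0) = f h := by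
    rw [dif_pos ((‹H.Normal›.inv_mul_mul_mem_iff x h).2 h.2), ← hf x⁻¹ h]
    congr 1
    ext
    simp
  have hcard : (Nat.card G : ℂ) = H.index * Nat.card H := by
    exact_mod_cast H.index_mul_card.symm
  have hH : (Nat.card H : ℂ) ≠ 0 := Nat.cast_ne_zero.2 Nat.card_pos.ne'
  rw [inductionHom_apply, Finset.sum_congr rfl fun x _ => hterm x, Finset.sum_const,
    Finset.card_univ, nsmul_eq_mul, ← Nat.card_eq_fintype_card, hcard]
  field_simp

theorem comp_conjNormal_eq_of_injective
    (hinj : Function.Injective ((inductionHom H).domRestrict (complexRepGroup H)))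
    {χ : H → ℂ} (hχ : χ ∈ complexRepGroup H) (σ : G) : χ ∘ MulAut.conjNormal σ = χ := by
  have hσχ := complexRepGroup.comp_mem (MulAut.conjNormal σ).toMonoidHom hχ
  exact congrArg Subtype.val (@hinj ⟨_, hσχ⟩ ⟨χ, hχ⟩ (inductionHom_comp_conjNormal χ σ))

theorem inductionHom_domRestrict_injective_of_forall_exists_center_mul_mem
    (hG : ∀ g : G, ∃ z ∈ Subgroup.center G, z * g ∈ H) :
    Function.Injective ((inductionHom H).domRestrict (complexRepGroup H)) := by
  rw [injective_iff_map_eq_zero]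
  rintro ⟨f, hf⟩ hf0
  have hinv (g : G) (h : H) : f (MulAut.conjNormal g h) = f h := by
    obtain ⟨z, hz, hzg⟩ := hG g
    have hconj : MulAut.conjNormal g h = ⟨z * g, hzg⟩ * h * ⟨z * g, hzg⟩⁻¹ := by
      ext
      simp only [MulAut.conjNormal_apply, Subgroup.coe_mul, Subgroup.coe_inv]
      rw [show z * g * h * (z * g)⁻¹ = z * (g * h * g⁻¹) * z⁻¹ by group,
        ← Subgroup.mem_center_iff.1 hz, mul_inv_cancel_right]
    rw [hconj, complexRepGroup.apply_conj hf]
  ext h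
  have hh := congrFun hf0 h
  rw [AddMonoidHom.domRestrict_apply, inductionHom_apply_coe_of_forall_conjNormal hinv,
    Pi.zero_apply, mul_eq_zero, Nat.cast_eq_zero] at hh
  exact hh.resolve_left Subgroup.index_ne_zero_of_finite

end Normal

theorem exists_card_eq_two_pow_iff_ringChar_eq_two {F : Type*} [Field F] [Fintype F] :
    (∃ k : ℕ, Fintype.card F = 2 ^ k) ↔ ringChar F = 2 := by
  constructor
  · rintro ⟨k, hk⟩
    obtain ⟨n, hp, hcard⟩ := FiniteField.card F (ringChar F)
    have hdvd : ringChar F ∣ 2 ^ k := hk ▸ hcard ▸ dvd_pow_self _ n.ne_zero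
    exact (Nat.prime_dvd_prime_iff_eq hp Nat.prime_two).1 (hp.dvd_of_dvd_pow hdvd)
  · intro h
    have : CharP F 2 := h ▸ ringChar.charP F
    obtain ⟨n, -, hcard⟩ := FiniteField.card F 2
    exact ⟨n, hcard⟩

namespace SL2subgroup

variable {F : Type} [Field F]

theorem mem_iff {g : GL (Fin 2) F} : g ∈ SL2subgroup F ↔ (g : Matrix (Fin 2) (Fin 2) F).det = 1 :=
  ⟨by rintro ⟨s, rfl⟩; exact s.prop, fun h => ⟨⟨g, h⟩, Units.ext rfl⟩⟩

instance normal : (SL2subgroup F).Normal := by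
  have : SL2subgroup F = Matrix.GeneralLinearGroup.det.ker := by
    ext g
    rw [mem_iff, MonoidHom.mem_ker, Units.ext_iff]
    rfl
  rw [this]
  infer_instance

theorem exists_center_mul_mem (hsq : ∀ a : F, IsSquare a) (g : GL (Fin 2) F) :
    ∃ z ∈ Subgroup.center (GL (Fin 2) F), z * g ∈ SL2subgroup F := by
  obtain ⟨s, hs⟩ := hsq (g : Matrix (Fin 2) (Fin 2) F).det
  have hs0 : s ≠ 0 := by
    rintro rfl
    exact Matrix.GeneralLinearGroup.det_ne_zero g (by simpa using hs)
  refine ⟨Matrix.GeneralLinearGroup.scalar (Fin 2) (Units.mk0 s hs0)⁻¹, ?_, ?_⟩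
  · rw [Matrix.GeneralLinearGroup.center_eq_range_scalar]
    exact ⟨_, rfl⟩
  · rw [mem_iff, Units.val_mul, Matrix.det_mul, Matrix.GeneralLinearGroup.coe_scalar, hs,
      Matrix.det_fin_two]
    simp [field]

def unipotent (a : F) : SL2subgroup F :=
  ⟨Matrix.SpecialLinearGroup.toGL ⟨!![1, a; 0, 1], by simp⟩, ⟨_, rfl⟩⟩

def diagGL {ε : F} (hε : ε ≠ 0) : GL (Fin 2) F :=
  Matrix.GeneralLinearGroup.mkOfDetNeZero !![ε, 0; 0, 1] (by simpa using hε)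

theorem coe_unipotent (a : F) :
    (((unipotent a : GL (Fin 2) F)) : Matrix (Fin 2) (Fin 2) F) = !![1, a; 0, 1] :=
  rfl

theorem conjNormal_diagGL_unipotent {ε : F} (hε : ε ≠ 0) (a : F) :
    MulAut.conjNormal (diagGL hε) (unipotent a) = unipotent (ε * a) := by
  ext : 1
  rw [MulAut.conjNormal_apply, mul_inv_eq_iff_eq_mul, Units.ext_iff, Units.val_mul,
    Units.val_mul, coe_unipotent, coe_unipotent]
  simp [diagGL]

theorem isSquare_mul_of_isConj_unipotent {a b : F} (h : IsConj (unipotent a) (unipotent b)) :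
    IsSquare (a * b) := by
  obtain ⟨c, hc⟩ := isConj_iff.1 h
  set B := ((c : GL (Fin 2) F) : Matrix (Fin 2) (Fin 2) F)
  have hdet : B.det = 1 := mem_iff.1 c.2
  have hBU : B * !![1, a; 0, 1] = !![1, b; 0, 1] * B := by
    rw [← coe_unipotent, ← coe_unipotent, ← Units.val_mul, ← Units.val_mul, ← Subgroup.coe_mul,
      ← Subgroup.coe_mul, ← hc, inv_mul_cancel_right]
  rw [Matrix.eta_fin_two B, Matrix.mul_fin_two, Matrix.mul_fin_two] at hBU
  have h01 := congrFun (congrFun hBU 0) 1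
  have h11 := congrFun (congrFun hBU 1) 1
  simp only [Matrix.of_apply, Matrix.cons_val', Matrix.cons_val_zero, Matrix.cons_val_one,
    Matrix.empty_val', Matrix.cons_val_fin_one] at h01 h11
  rw [Matrix.det_fin_two] at hdet
  exact ⟨b * B 1 1, by linear_combination (b * B 1 1) * h01 - a * b * hdet - b * B 0 1 * h11⟩

end SL2subgroup

theorem statement7 (F : Type) [Field F] [Fintype F] [DecidableEq F] :
    Function.Injective
        ((inductionHom (SL2subgroup F)).domRestrict (complexRepGroup ↥(SL2subgroup F))) ↔
      ∃ k : ℕ, Fintype.card F = 2 ^ k := by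
  rw [exists_card_eq_two_pow_iff_ringChar_eq_two]
  refine ⟨fun hinj => ?_, fun hF => ?_⟩
  · by_contra hF
    obtain ⟨ε, hε⟩ := FiniteField.exists_nonsquare hF
    have hε0 : ε ≠ 0 := by
      rintro rfl
      exact hε IsSquare.zero
    refine hε (one_mul ε ▸ SL2subgroup.isSquare_mul_of_isConj_unipotent ?_)
    refine FDRep.isConj_of_forall_character_eq (k := ℂ) fun V => ?_
    have hχ := comp_conjNormal_eq_of_injective hinj (AddSubgroup.subset_closure ⟨V, rfl⟩)
      (SL2subgroup.diagGL hε0)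
    rw [← mul_one ε, ← SL2subgroup.conjNormal_diagGL_unipotent hε0]
    exact (congrFun hχ _).symm
  · exact inductionHom_domRestrict_injective_of_forall_exists_center_mul_mem
      (SL2subgroup.exists_center_mul_mem (FiniteField.isSquare_of_char_two hF))
end

section
/- Let q be a prime power with q ≡ 3 (mod 4) and let 𝔽_q be the field with q elements. Then for every n ∈ SL(2, 𝔽_q), the set of elements of SL(2, 𝔽_q) that are conjugate in GL(2, 𝔽_q) to n or to n^{-1} equals the set of elements of SL(2, 𝔽_q) that are conjugate in SL(2, 𝔽_q) to n or to n^{-1}; that is, (n)^±_{GL(2,𝔽_q)} ∩ SL(2, 𝔽_q) = (n)^±_{SL(2,𝔽_q)}. -/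
/-!
Conjugation by `g ∈ GL(2, F)` and by `s⁻¹ • g` agree, and `s⁻¹ • g ∈ SL(2, F)` when
`det g = s²`; so GL-conjugate elements of `SL(2, F)` are SL-conjugate when the conjugator has
square determinant. Every `n ∈ SL(2, F)` is conjugate to `n⁻¹` by a matrix of determinant `-1`,
which is a nonsquare when `q ≡ 3 (mod 4)`; composing with it turns a conjugator of nonsquare
determinant into one of square determinant, at the price of replacing `n` by `n⁻¹`.
-/

open Matrix
open scoped MatrixGroups

lemma FiniteField.isSquare_mul_of_not_isSquare {F : Type*} [Field F] [Fintype F] {a b : F}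
    (ha : ¬IsSquare a) (hb : ¬IsSquare b) : IsSquare (a * b) := by
  classical
  have hab : a * b ≠ 0 :=
    mul_ne_zero (by rintro rfl; exact ha .zero) (by rintro rfl; exact hb .zero)
  rw [← quadraticChar_one_iff_isSquare hab, map_mul,
    quadraticChar_neg_one_iff_not_isSquare.mpr ha, quadraticChar_neg_one_iff_not_isSquare.mpr hb,
    neg_one_mul, neg_neg]

namespace Matrix.SpecialLinearGroup

lemma isConj_of_semiconjBy_of_det_eq_pow {ι F : Type*} [Fintype ι] [DecidableEq ι] [Field F]
    {n x : SpecialLinearGroup ι F} {g : Matrix ι ι F} {s : F} (hs : s ≠ 0)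
    (hdet : g.det = s ^ Fintype.card ι) (h : SemiconjBy g (n : Matrix ι ι F) x) :
    IsConj n x := by
  let c : SpecialLinearGroup ι F :=
    ⟨s⁻¹ • g, by rw [det_smul, hdet, ← mul_pow, inv_mul_cancel₀ hs, one_pow]⟩
  refine ⟨toUnits c, Subtype.ext ?_⟩
  change (s⁻¹ • g) * (n : Matrix ι ι F) = x * (s⁻¹ • g)
  rw [smul_mul_assoc, h.eq, mul_smul_comm]

lemma exists_semiconjBy_of_isConj_toGL {ι R : Type*} [Fintype ι] [DecidableEq ι] [CommRing R]
    {n x : SpecialLinearGroup ι R} (h : IsConj (toGL n) (toGL x)) :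
    ∃ g : GL ι R, SemiconjBy (g : Matrix ι ι R) n x := by
  obtain ⟨c, hc⟩ := h
  exact ⟨c, congrArg Units.val hc⟩

lemma exists_det_eq_neg_one_semiconjBy_inv {F : Type*} [Field F] (n : SL(2, F)) :
    ∃ w : Matrix (Fin 2) (Fin 2) F,
      w.det = -1 ∧ SemiconjBy w (n : Matrix (Fin 2) (Fin 2) F) ↑n⁻¹ := by
  obtain ⟨a, b, c, d, hn⟩ : ∃ a b c d, (n : Matrix (Fin 2) (Fin 2) F) = !![a, b; c, d] :=
    ⟨_, _, _, _, eta_fin_two _⟩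
  -- Since `↑n⁻¹ = adjugate n`, a traceless `w` works iff `trace (w * n) = 0`.
  have traceless_semiconj (x y z : F) (htr : (a - d) * x + c * y + b * z = 0) :
      SemiconjBy !![x, y; z, -x] (n : Matrix (Fin 2) (Fin 2) F) ↑n⁻¹ := by
    rw [SemiconjBy, coe_inv, hn, adjugate_fin_two_of]
    ext i j
    fin_cases i <;> fin_cases j <;> simp [mul_apply] <;> grind
  have det_traceless (x y z : F) : det !![x, y; z, -x] = -(x * x + y * z) := by
    simp [det_fin_two_of]; ring
  by_cases hc : c = 0
  · by_cases hb : b = 0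
    · exact ⟨!![0, 1; 1, -0], by rw [det_traceless]; ring,
        traceless_semiconj 0 1 1 (by rw [hb, hc]; ring)⟩
    · exact ⟨!![1, 0; -(a - d) / b, -1], by rw [det_traceless]; ring,
        traceless_semiconj 1 0 _ (by field_simp; ring)⟩
  · exact ⟨!![1, -(a - d) / c; 0, -1], by rw [det_traceless]; ring,
      traceless_semiconj 1 _ 0 (by field_simp; ring)⟩

lemma isConj_of_semiconjBy_of_isSquare_det {F : Type*} [Field F] {n x : SL(2, F)}
    {g : Matrix (Fin 2) (Fin 2) F} (hg : g.det ≠ 0) (hsq : IsSquare g.det)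
    (h : SemiconjBy g (n : Matrix (Fin 2) (Fin 2) F) x) : IsConj n x := by
  obtain ⟨s, hs⟩ := hsq
  refine isConj_of_semiconjBy_of_det_eq_pow (s := s) ?_ (by rw [hs, Fintype.card_fin, sq]) h
  rintro rfl
  exact hg (by rw [hs, mul_zero])

lemma isConj_or_isConj_inv_of_semiconjBy {F : Type*} [Field F] [Fintype F]
    (hq : Fintype.card F % 4 = 3) {n x : SL(2, F)} {g : Matrix (Fin 2) (Fin 2) F}
    (hg : g.det ≠ 0) (h : SemiconjBy g (n : Matrix (Fin 2) (Fin 2) F) x) :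
    IsConj n x ∨ IsConj n⁻¹ x := by
  by_cases hsq : IsSquare g.det
  · exact .inl (isConj_of_semiconjBy_of_isSquare_det hg hsq h)
  obtain ⟨w, hw_det, hw⟩ := exists_det_eq_neg_one_semiconjBy_inv n⁻¹
  rw [inv_inv] at hw
  have h_neg_one : ¬IsSquare (-1 : F) := by
    rw [FiniteField.isSquare_neg_one_iff]
    omega
  refine .inr (isConj_of_semiconjBy_of_isSquare_det (g := g * w) ?_ ?_ (h.mul_left hw)) <;>
    rw [det_mul, hw_det]
  · exact mul_ne_zero hg (neg_ne_zero.mpr one_ne_zero)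
  · exact FiniteField.isSquare_mul_of_not_isSquare hsq h_neg_one

lemma isConj_or_isConj_inv_of_isConj_toGL {F : Type*} [Field F] [Fintype F]
    (hq : Fintype.card F % 4 = 3) {n x : SL(2, F)} (h : IsConj (toGL n) (toGL x)) :
    IsConj n x ∨ IsConj n⁻¹ x := by
  obtain ⟨g, hg⟩ := exists_semiconjBy_of_isConj_toGL h
  exact isConj_or_isConj_inv_of_semiconjBy hq (det_ne_zero_of_left_inverse g.inv_mul) hg

end Matrix.SpecialLinearGroup

theorem statement10 (F : Type) [Field F] [Fintype F] (hq : Fintype.card F % 4 = 3) :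
    ∀ n x : Matrix.SpecialLinearGroup (Fin 2) F,
      (IsConj (Matrix.SpecialLinearGroup.toGL n) (Matrix.SpecialLinearGroup.toGL x) ∨
        IsConj (Matrix.SpecialLinearGroup.toGL n⁻¹) (Matrix.SpecialLinearGroup.toGL x)) ↔
      (IsConj n x ∨ IsConj n⁻¹ x) := by
  intro n x
  refine ⟨?_, Or.imp SpecialLinearGroup.toGL.map_isConj SpecialLinearGroup.toGL.map_isConj⟩
  rintro (h | h)
  · exact SpecialLinearGroup.isConj_or_isConj_inv_of_isConj_toGL hq h
  · simpa only [inv_inv, or_comm] using SpecialLinearGroup.isConj_or_isConj_inv_of_isConj_toGL hq h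
end

section
/- Let G be a finite group and N a normal subgroup of G such that for every n ∈ N the real conjugacy class of n in G intersected with N equals the real conjugacy class of n in N, i.e., (n)^±_G ∩ N = (n)^±_N. Let V be a finite-dimensional real representation of N with character χ_V, and let χ_W be the character of the induced representation W = Ind_N^G(V). Then χ_W(g) = 0 for every g ∈ G not lying in N, and χ_W(g) = [G : N] · χ_V(g) for every g ∈ N. -/
/-!
STATEMENT 11: Let `G` be a finite group and `N` a normal subgroup of `G` such that for
every `n ∈ N` the real conjugacy class of `n` in `G` intersected with `N` equals the real
conjugacy class of `n` in `N`, i.e. `(n)^±_G ∩ N = (n)^±_N`. Let `V` be a finite-dimensional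
real representation of `N` with character `χ_V`, and let `χ_W` be the character of the
induced representation `W = Ind_N^G(V)`. Then `χ_W(g) = 0` for every `g ∈ G` not lying in
`N`, and `χ_W(g) = [G : N] · χ_V(g)` for every `g ∈ N`.

The induced representation is realized concretely: `Ind_N^G(V)` is the space of functions
`f : G → V` with `f (n * x) = ρ n (f x)` for `n ∈ N`, on which `G` acts by right
translation; its character at `g` is the trace of the action of `g`. -/

variable {G : Type} [Group G]

/-- The carrier of the induced representation `Ind_H^G V`: the space of functions
`f : G → V` satisfying `f (h * x) = ρ h (f x)` for all `h ∈ H`, `x ∈ G`. -/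
def indCarrier (H : Subgroup G) {V : Type} [AddCommGroup V] [Module ℝ V]
    (ρ : Representation ℝ ↥H V) : Submodule ℝ (G → V) where
  carrier := {f | ∀ (h : ↥H) (x : G), f ((h : G) * x) = ρ h (f x)}
  add_mem' := by
    intro a b ha hb h x
    simp only [Pi.add_apply, ha h x, hb h x, map_add]
  zero_mem' := by
    intro h x
    simp
  smul_mem' := by
    intro c a ha h x
    simp only [Pi.smul_apply, ha h x, map_smul]

/-- The induced representation `Ind_H^G V` of a real representation `ρ` of `H ≤ G`:
`G` acts on `indCarrier H ρ` by right translation. -/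
noncomputable def indRep (H : Subgroup G) {V : Type} [AddCommGroup V] [Module ℝ V]
    (ρ : Representation ℝ ↥H V) : Representation ℝ G ↥(indCarrier H ρ) where
  toFun g := (LinearMap.funLeft ℝ V (fun x => x * g)).restrict
    (p := indCarrier H ρ) (q := indCarrier H ρ)
    (fun f hf h x => by
      simpa [LinearMap.funLeft_apply, mul_assoc] using hf h (x * g))
  map_one' := by
    apply LinearMap.ext
    intro f
    apply Subtype.ext
    funext x
    simp [LinearMap.restrict_apply, LinearMap.funLeft_apply]
  map_mul' g g' := by
    apply LinearMap.ext
    intro f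
    apply Subtype.ext
    funext x
    show (f : G → V) (x * (g * g')) = (f : G → V) (x * g * g')
    rw [mul_assoc]

/-- The submodule of vectors fixed by every element of a subgroup `K`. -/
def fixedSubmodule {V : Type} [AddCommGroup V] [Module ℝ V]
    (ρ : Representation ℝ G V) (K : Subgroup G) : Submodule ℝ V where
  carrier := {v | ∀ g ∈ K, ρ g v = v}
  add_mem' := by
    intro a b ha hb g hg
    simp [map_add, ha g hg, hb g hg]
  zero_mem' := by
    intro g hg
    simp
  smul_mem' := by
    intro c v hv g hg
    simp [map_smul, hv g hg]

/-- The real dimension of the subspace of `K`-fixed vectors. -/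
noncomputable def fixedDim {V : Type} [AddCommGroup V] [Module ℝ V]
    (ρ : Representation ℝ G V) (K : Subgroup G) : ℕ :=
  Module.finrank ℝ ↥(fixedSubmodule ρ K)

/-!
Restricting functions to representatives of the right cosets `N \ G` identifies `Ind_N^G V`
with `(N \ G) → V`. There `g` acts by a block-monomial operator whose diagonal block at the
coset `N x` is `ρ (x g x⁻¹)` if `g` fixes `N x` and zero otherwise, which gives the Frobenius
formula `χ_W(g) = ∑_{N x} χ̇_V(x g x⁻¹)`, with `χ̇_V` the extension of `χ_V` by zero.
For `g ∉ N` no coset is fixed, as `N` is normal. For `g ∈ N` each `x g x⁻¹` is `G`-conjugate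
to `g`, hence by hypothesis `N`-conjugate to `g` or `g⁻¹`; and a real character satisfies
`χ(g⁻¹) = χ(g)`, because averaging `(ρ h)ᵀ (ρ h)` over the group gives an invariant positive
definite form, which makes `ρ g⁻¹` conjugate to `(ρ g)ᵀ`. So every summand equals `χ_V(g)`.
-/

open LinearMap in
theorem LinearMap.trace_pi_comp_proj {R M ι : Type*} [CommRing R] [AddCommGroup M] [Module R M]
    [Module.Free R M] [Module.Finite R M] [Fintype ι] [DecidableEq ι]
    (σ : ι → ι) (A : ι → M →ₗ[R] M) :
    trace R (ι → M) (pi fun i => A i ∘ₗ proj (σ i)) =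
      ∑ i, if σ i = i then trace R M (A i) else 0 := by
  have hsum : (pi fun i => A i ∘ₗ proj (σ i) : (ι → M) →ₗ[R] ι → M) =
      ∑ i, single R (fun _ => M) i ∘ₗ A i ∘ₗ proj (σ i) := by
    ext φ j
    simp [Pi.single_apply]
  rw [hsum, map_sum]
  refine Finset.sum_congr rfl fun i _ => ?_
  rw [trace_comp_comm', comp_assoc]
  split_ifs with h
  · rw [h, proj_comp_single_same, comp_id]
  · rw [proj_comp_single_ne _ _ _ _ h, comp_zero, map_zero]

open Matrix ComplexOrder in
theorem Matrix.exists_posDef_forall_conjTranspose_mul_mul_eq {𝕜 n H : Type*} [RCLike 𝕜]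
    [Fintype n] [DecidableEq n] [Group H] [Fintype H] (M : H →* Matrix n n 𝕜) :
    ∃ B : Matrix n n 𝕜, B.PosDef ∧ ∀ g, (M g)ᴴ * B * M g = B := by
  classical
  refine ⟨∑ h, (M h)ᴴ * M h, ?_, fun g => ?_⟩
  · rw [← Finset.add_sum_erase _ _ (Finset.mem_univ 1), map_one, conjTranspose_one, one_mul]
    exact PosDef.one.add_posSemidef <|
      posSemidef_sum _ fun h _ => posSemidef_conjTranspose_mul_self (M h)
  · calc (M g)ᴴ * (∑ h, (M h)ᴴ * M h) * M g = ∑ h, (M (h * g))ᴴ * M (h * g) := by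
          simp only [Finset.mul_sum, Finset.sum_mul, map_mul, conjTranspose_mul, Matrix.mul_assoc]
      _ = ∑ h, (M h)ᴴ * M h := Equiv.sum_comp (Equiv.mulRight g) fun h => (M h)ᴴ * M h

open Matrix ComplexOrder in
theorem Matrix.trace_map_inv_eq_star {𝕜 n H : Type*} [RCLike 𝕜] [Fintype n] [DecidableEq n]
    [Group H] [Fintype H] (M : H →* Matrix n n 𝕜) (g : H) :
    trace (M g⁻¹) = star (trace (M g)) := by
  obtain ⟨B, hB, hinv⟩ := exists_posDef_forall_conjTranspose_mul_mul_eq M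
  have hdet : IsUnit B.det := (isUnit_iff_isUnit_det B).1 hB.isUnit
  have hconj : M g⁻¹ = B⁻¹ * ((M g)ᴴ * B) :=
    calc M g⁻¹ = B⁻¹ * (B * M g⁻¹) := by
          rw [← Matrix.mul_assoc, nonsing_inv_mul _ hdet, Matrix.one_mul]
      _ = B⁻¹ * ((M g)ᴴ * B * M g * M g⁻¹) := by rw [hinv g]
      _ = B⁻¹ * ((M g)ᴴ * B) := by
        rw [Matrix.mul_assoc _ (M g), ← map_mul, mul_inv_cancel, map_one, Matrix.mul_one]
  rw [hconj, trace_mul_comm, Matrix.mul_assoc, mul_nonsing_inv _ hdet, Matrix.mul_one,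
    trace_conjTranspose]

open LinearMap in
theorem Representation.trace_inv_eq_star {𝕜 H V : Type*} [RCLike 𝕜] [Group H] [Finite H]
    [AddCommGroup V] [Module 𝕜 V] [FiniteDimensional 𝕜 V] (ρ : Representation 𝕜 H V) (g : H) :
    trace 𝕜 V (ρ g⁻¹) = star (trace 𝕜 V (ρ g)) := by
  cases nonempty_fintype H
  let b := Module.finBasis 𝕜 V
  rw [trace_eq_matrix_trace 𝕜 b, trace_eq_matrix_trace 𝕜 b]
  exact Matrix.trace_map_inv_eq_star ((toMatrixAlgEquiv b).toRingEquiv.toMonoidHom.comp ρ) g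

open LinearMap in
theorem Representation.trace_eq_of_isConj {k H V : Type*} [CommRing k] [Group H]
    [AddCommGroup V] [Module k V] (ρ : Representation k H V) {x y : H} (h : IsConj x y) :
    trace k V (ρ y) = trace k V (ρ x) := by
  obtain ⟨c, rfl⟩ := isConj_iff.1 h
  rw [map_mul, trace_mul_comm, ← map_mul, inv_mul_cancel_left]

abbrev RightCosets (H : Subgroup G) : Type := Quotient (QuotientGroup.rightRel H)

section Induced

variable (H : Subgroup G)

noncomputable def cosetOffset (x : G) : H :=
  ⟨x * (Quotient.mk _ x : RightCosets H).out⁻¹,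
    QuotientGroup.rightRel_apply.mp (Quotient.mk_out x)⟩

theorem cosetOffset_mul_out (x : G) :
    (cosetOffset H x : G) * (Quotient.mk _ x : RightCosets H).out = x :=
  inv_mul_cancel_right _ _

theorem coe_cosetOffset_of_mk_eq {x : G} {q : RightCosets H} (hx : Quotient.mk _ x = q) :
    (cosetOffset H x : G) = x * q.out⁻¹ := by
  rw [← hx]
  rfl

theorem cosetOffset_out (q : RightCosets H) : cosetOffset H q.out = 1 :=
  Subtype.ext <| (coe_cosetOffset_of_mk_eq H (Quotient.out_eq q)).trans (mul_inv_cancel _)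

theorem RightCosets.mk_mul_left (h : H) (x : G) :
    (Quotient.mk _ (h * x) : RightCosets H) = Quotient.mk _ x :=
  Quotient.sound <| QuotientGroup.rightRel_apply.mpr <| by simp

theorem cosetOffset_mul_left (h : H) (x : G) :
    cosetOffset H (h * x) = h * cosetOffset H x :=
  Subtype.ext <| by
    rw [coe_cosetOffset_of_mk_eq H (RightCosets.mk_mul_left H h x)]
    simp only [Subgroup.coe_mul, cosetOffset, mul_assoc]

theorem RightCosets.mk_out_mul_eq_iff (q : RightCosets H) (g : G) :
    (Quotient.mk _ (q.out * g) : RightCosets H) = q ↔ q.out * g * q.out⁻¹ ∈ H := by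
  refine Quotient.mk_eq_iff_out.trans (QuotientGroup.rightRel_apply.trans ?_)
  rw [← H.inv_mem_iff]
  group

theorem card_rightCosets [Fintype (RightCosets H)] : Fintype.card (RightCosets H) = H.index := by
  rw [← Nat.card_eq_fintype_card,
    Nat.card_congr (QuotientGroup.quotientRightRelEquivQuotientLeftRel H), Subgroup.index]

variable {V : Type} [AddCommGroup V] [Module ℝ V] (ρ : Representation ℝ H V)

noncomputable def indCarrierEquivPi : indCarrier H ρ ≃ₗ[ℝ] (RightCosets H → V) where
  toFun f q := f.1 q.out
  map_add' _ _ := rfl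
  map_smul' _ _ := rfl
  invFun φ := ⟨fun x => ρ (cosetOffset H x) (φ (Quotient.mk _ x)), fun h x => by
    simp only [RightCosets.mk_mul_left, cosetOffset_mul_left, map_mul, Module.End.mul_apply]⟩
  left_inv f := Subtype.ext <| funext fun x => by
    dsimp only
    rw [← f.2, cosetOffset_mul_out]
  right_inv φ := funext fun q => by
    simp only [cosetOffset_out, map_one, Module.End.one_apply, Quotient.out_eq]

theorem indCarrierEquivPi_conj_indRep (g : G) :
    (indCarrierEquivPi H ρ).conj (indRep H ρ g) =
      LinearMap.pi fun q =>
        ρ (cosetOffset H (q.out * g)) ∘ₗ LinearMap.proj (Quotient.mk _ (q.out * g)) :=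
  LinearMap.ext fun _ => funext fun _ => rfl

open scoped Classical in
theorem trace_indRep [Fintype G] [FiniteDimensional ℝ V] (g : G) :
    LinearMap.trace ℝ (indCarrier H ρ) (indRep H ρ g) =
      ∑ q : RightCosets H,
        if h : q.out * g * q.out⁻¹ ∈ H then LinearMap.trace ℝ V (ρ ⟨_, h⟩) else 0 := by
  rw [← LinearMap.trace_conj' (indRep H ρ g) (indCarrierEquivPi H ρ),
    indCarrierEquivPi_conj_indRep, LinearMap.trace_pi_comp_proj]
  refine Finset.sum_congr rfl fun q _ => ?_
  by_cases hq : q.out * g * q.out⁻¹ ∈ H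
  · have hfix := (RightCosets.mk_out_mul_eq_iff H q g).2 hq
    rw [if_pos hfix, dif_pos hq]
    congr
    exact Subtype.ext (coe_cosetOffset_of_mk_eq H hfix)
  · rw [if_neg (mt (RightCosets.mk_out_mul_eq_iff H q g).1 hq), dif_neg hq]

end Induced

theorem statement11 {G : Type} [Group G] [Fintype G] (N : Subgroup G) [N.Normal]
    (hreal : ∀ n x : ↥N,
      (IsConj (n : G) (x : G) ∨ IsConj ((n : G))⁻¹ (x : G)) ↔ (IsConj n x ∨ IsConj n⁻¹ x))
    {V : Type} [AddCommGroup V] [Module ℝ V] [FiniteDimensional ℝ V]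
    (ρ : Representation ℝ ↥N V) :
    (∀ g : G, g ∉ N → LinearMap.trace ℝ ↥(indCarrier N ρ) (indRep N ρ g) = 0) ∧
    (∀ (g : G) (hg : g ∈ N),
        LinearMap.trace ℝ ↥(indCarrier N ρ) (indRep N ρ g) =
          (N.index : ℝ) * LinearMap.trace ℝ V (ρ ⟨g, hg⟩)) := by
  classical
  have hclass : ∀ n x : N, IsConj (n : G) x →
      LinearMap.trace ℝ V (ρ x) = LinearMap.trace ℝ V (ρ n) := by
    intro n x hnx
    rcases (hreal n x).1 (Or.inl hnx) with h | h
    · exact ρ.trace_eq_of_isConj h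
    · rw [ρ.trace_eq_of_isConj h, ρ.trace_inv_eq_star, star_trivial]
  refine ⟨fun g hg => ?_, fun g hg => ?_⟩
  · rw [trace_indRep]
    refine Finset.sum_eq_zero fun q _ => dif_neg fun hq => hg ?_
    simpa [mul_assoc] using Subgroup.Normal.conj_mem ‹_› _ hq q.out⁻¹
  · have hconj (q : RightCosets N) : q.out * g * q.out⁻¹ ∈ N :=
      Subgroup.Normal.conj_mem ‹_› _ hg _
    rw [trace_indRep, Finset.sum_congr rfl fun q _ =>
      (dif_pos (hconj q)).trans (hclass ⟨g, hg⟩ _ (isConj_iff.2 ⟨q.out, rfl⟩)),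
      Finset.sum_const, Finset.card_univ, card_rightCosets, nsmul_eq_mul]
end

section
/- Let G be a finite group and N a normal subgroup of G such that for every n ∈ N one has (n)^±_G ∩ N = (n)^±_N. Let V be a finite-dimensional real representation of N satisfying the weak gap condition over N: for every subgroup P of N of prime power order and every subgroup K of N with P < K ≤ N, dim_ℝ V^P ≥ 2 · dim_ℝ V^K. Then the induced representation W = Ind_N^G(V) satisfies the weak gap condition over G: for every subgroup P of G of prime power order and every subgroup K of G with P < K ≤ G, dim_ℝ W^P ≥ 2 · dim_ℝ W^K. -/
/-!
STATEMENT 13: Let `G` be a finite group and `N` a normal subgroup of `G` such that for every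
`n ∈ N` one has `(n)^±_G ∩ N = (n)^±_N`. Let `V` be a finite-dimensional real representation
of `N` satisfying the weak gap condition over `N`: for every subgroup `P` of `N` of prime
power order and every subgroup `K` of `N` with `P < K ≤ N`,
`dim_ℝ V^P ≥ 2 · dim_ℝ V^K`. Then the induced representation `W = Ind_N^G(V)` satisfies the
weak gap condition over `G`.

The induced representation is realized concretely: `Ind_N^G(V)` is the space of functions
`f : G → V` with `f (n * x) = ρ n (f x)` for `n ∈ N`, on which `G` acts by right
translation. -/

/-- A natural number is a prime power `p ^ k` (with `k ≥ 0` allowed). -/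
def IsPrimePowerOrder (n : ℕ) : Prop :=
  ∃ p k : ℕ, Nat.Prime p ∧ n = p ^ k

variable {G : Type} [Group G]

/-!
An element of `W^K` is a function `f` with `f (n * x) = ρ n (f x)` and `f (x * k) = f x`, so it is
determined by its values at representatives `x` of the double cosets `N x K = x (N ⊔ K)`, and its
value at `x` is fixed by `N ∩ x K x⁻¹`. Conversely, averaging over `P` a function supported on
`N x` produces elements of `W^P` with prescribed values in `V^(N ∩ x P x⁻¹)` at points `x` lying
in distinct cosets of `N ⊔ P`. Hence `dim W^K ≤ ∑ dim V^(N ∩ x K x⁻¹)` over any set of coset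
representatives of `N ⊔ K`, and `∑ dim V^(N ∩ x P x⁻¹) ≤ dim W^P` over points in distinct cosets
of `N ⊔ P`. As `P < K`, Dedekind's law gives `N ⊓ P < N ⊓ K` or `N ⊔ P < N ⊔ K`. In the first
case the gap condition over `N` applies to `N ∩ x P x⁻¹ < N ∩ x K x⁻¹` and doubles every summand;
in the second case every coset of `N ⊔ K` contains two cosets of `N ⊔ P`, which doubles the
number of summands.
-/

namespace Subgroup

/-- The subgroup `N ∩ x S x⁻¹`, as a subgroup of `N`. -/
def conjSubgroupOf (N : Subgroup G) (x : G) (S : Subgroup G) : Subgroup N :=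
  S.comap (((MulAut.conj x)⁻¹ : MulAut G).toMonoidHom.comp N.subtype)

variable {N : Subgroup G}

@[simp]
theorem mem_conjSubgroupOf {x : G} {S : Subgroup G} {q : N} :
    q ∈ N.conjSubgroupOf x S ↔ x⁻¹ * q * x ∈ S := by
  simp [conjSubgroupOf]

theorem conjSubgroupOf_mono (x : G) {S T : Subgroup G} (h : S ≤ T) :
    N.conjSubgroupOf x S ≤ N.conjSubgroupOf x T :=
  comap_mono h

theorem conjSubgroupOf_lt_conjSubgroupOf [N.Normal] (x : G) {S T : Subgroup G} (hST : S ≤ T)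
    (h : N ⊓ S < N ⊓ T) : N.conjSubgroupOf x S < N.conjSubgroupOf x T := by
  obtain ⟨n, ⟨hnN, hnT⟩, hnS⟩ := SetLike.exists_of_lt h
  have hconj : x⁻¹ * (x * n * x⁻¹) * x = n := by group
  refine lt_of_le_of_ne (conjSubgroupOf_mono x hST) fun heq => hnS ⟨hnN, ?_⟩
  have hmem : (⟨x * n * x⁻¹, Normal.conj_mem ‹_› n hnN x⟩ : N) ∈ N.conjSubgroupOf x T := by
    simpa [hconj] using hnT
  rw [← heq, mem_conjSubgroupOf] at hmem
  simpa [hconj] using hmem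

theorem isPrimePowerOrder_card_conjSubgroupOf [Finite G] (x : G) {S : Subgroup G}
    (hS : IsPrimePowerOrder (Nat.card S)) :
    IsPrimePowerOrder (Nat.card (N.conjSubgroupOf x S)) := by
  obtain ⟨p, k, hp, hcard⟩ := hS
  have hdvd : Nat.card (N.conjSubgroupOf x S) ∣ p ^ k :=
    hcard ▸ card_comap_dvd_of_injective S _
      ((MulEquiv.injective ((MulAut.conj x)⁻¹)).comp N.subtype_injective)
  obtain ⟨i, -, hi⟩ := (Nat.dvd_prime_pow hp).mp hdvd
  exact ⟨p, i, hp, hi⟩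

/-- Dedekind's modular law. -/
theorem inf_lt_inf_or_sup_lt_sup (N : Subgroup G) [N.Normal] {P K : Subgroup G} (h : P < K) :
    N ⊓ P < N ⊓ K ∨ N ⊔ P < N ⊔ K := by
  refine or_iff_not_imp_left.mpr fun hinf => lt_of_le_of_ne (sup_le_sup_left h.le N) fun hsup => ?_
  have hinf : N ⊓ K ≤ N ⊓ P := ((inf_le_inf_left N h.le).lt_or_eq.resolve_left hinf).ge
  obtain ⟨k, hkK, hkP⟩ := SetLike.exists_of_lt h
  obtain ⟨n, hn, p, hp, rfl⟩ := mem_sup_of_normal_left.mp (hsup ▸ mem_sup_right hkK : k ∈ N ⊔ P)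
  have hnK : n ∈ K := by simpa using mul_mem hkK (inv_mem (h.le hp))
  exact hkP (mul_mem (hinf ⟨hn, hnK⟩).2 hp)

theorem eq_of_sumElim_inv_mul_mem {L H : Subgroup G} (hLH : L ≤ H) {m : G} (hmH : m ∈ H)
    (hmL : m ∉ L) {ι : Type} {x : ι → G} (hx : ∀ i j, (x i)⁻¹ * x j ∈ H → i = j) :
    ∀ a b : ι ⊕ ι, (Sum.elim x (x · * m) a)⁻¹ * Sum.elim x (x · * m) b ∈ L → a = b := by
  have hH {i j : ι} (h : (x i)⁻¹ * (x j * m) ∈ L) : i = j :=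
    hx i j (by simpa [mul_assoc] using mul_mem (hLH h) (inv_mem hmH))
  rintro (i | i) (j | j) h <;> simp only [Sum.elim_inl, Sum.elim_inr] at h
  · exact congrArg _ (hx i j (hLH h))
  · obtain rfl := hH h
    exact absurd (by simpa using h) hmL
  · have h' : (x j)⁻¹ * (x i * m) ∈ L := by simpa [mul_assoc] using inv_mem h
    obtain rfl := hH h'
    exact absurd (by simpa using h') hmL
  · refine congrArg _ (hx i j ?_)
    have h' := mul_mem (mul_mem hmH (hLH h)) (inv_mem hmH)
    rwa [show m * ((x i * m)⁻¹ * (x j * m)) * m⁻¹ = (x i)⁻¹ * x j by group] at h'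

end Subgroup

theorem QuotientGroup.exists_out_inv_mul_mem (H : Subgroup G) (y : G) :
    ∃ c : G ⧸ H, c.out⁻¹ * y ∈ H :=
  ⟨y, QuotientGroup.eq.mp (QuotientGroup.out_eq' _)⟩

theorem QuotientGroup.eq_of_out_inv_mul_out_mem {H : Subgroup G} {c c' : G ⧸ H}
    (h : c.out⁻¹ * c'.out ∈ H) : c = c' := by
  simpa using QuotientGroup.eq.mpr h

open Subgroup

section Fixed

variable {V : Type} [AddCommGroup V] [Module ℝ V] (σ : Representation ℝ G V)

theorem fixedSubmodule_anti {S T : Subgroup G} (h : S ≤ T) :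
    fixedSubmodule σ T ≤ fixedSubmodule σ S :=
  fun _ hv g hg => hv g (h hg)

theorem fixedDim_anti [FiniteDimensional ℝ V] {S T : Subgroup G} (h : S ≤ T) :
    fixedDim σ T ≤ fixedDim σ S :=
  Submodule.finrank_mono (fixedSubmodule_anti σ h)

theorem sum_mem_fixedSubmodule (P : Subgroup G) [Fintype P] (v : V) :
    ∑ p : P, σ p v ∈ fixedSubmodule σ P := by
  intro g hg
  rw [map_sum]
  refine Fintype.sum_equiv (Equiv.mulLeft ⟨g, hg⟩) _ _ fun p => ?_
  simp [← Module.End.mul_apply, ← map_mul]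

end Fixed

namespace Induced

variable {N : Subgroup G} {V : Type} [AddCommGroup V] [Module ℝ V] {ρ : Representation ℝ N V}

theorem indRep_apply_apply (g : G) (f : indCarrier N ρ) (x : G) :
    (indRep N ρ g f : G → V) x = (f : G → V) (x * g) :=
  rfl

theorem mem_fixedSubmodule_indRep {K : Subgroup G} {f : indCarrier N ρ} :
    f ∈ fixedSubmodule (indRep N ρ) K ↔ ∀ x, ∀ k ∈ K, (f : G → V) (x * k) = (f : G → V) x := by
  refine ⟨fun hf x k hk => congrFun (congrArg Subtype.val (hf k hk)) x, fun hf k hk => ?_⟩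
  ext x
  exact hf x k hk

theorem apply_mem_fixedSubmodule {K : Subgroup G} {f : indCarrier N ρ}
    (hf : f ∈ fixedSubmodule (indRep N ρ) K) (x : G) :
    (f : G → V) x ∈ fixedSubmodule ρ (N.conjSubgroupOf x K) := by
  intro q hq
  rw [← f.2 q x, show (q : G) * x = x * (x⁻¹ * q * x) by group]
  exact mem_fixedSubmodule_indRep.mp hf x _ (mem_conjSubgroupOf.mp hq)

theorem apply_eq_zero_of_inv_mul_mem_sup [N.Normal] {K : Subgroup G} {f : indCarrier N ρ}
    (hf : f ∈ fixedSubmodule (indRep N ρ) K) {x y : G} (hxy : x⁻¹ * y ∈ N ⊔ K)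
    (h0 : (f : G → V) x = 0) : (f : G → V) y = 0 := by
  obtain ⟨n, hn, k, hk, hnk⟩ := mem_sup_of_normal_left.mp hxy
  have hy : y = x * n * x⁻¹ * (x * k) := by
    rw [show x * n * x⁻¹ * (x * k) = x * (n * k) by group, hnk, mul_inv_cancel_left]
  rw [hy, f.2 ⟨_, Normal.conj_mem ‹_› n hn x⟩, mem_fixedSubmodule_indRep.mp hf x k hk, h0, map_zero]


variable (ρ)

noncomputable def evalFixed (K : Subgroup G) (x : G) :
    fixedSubmodule (indRep N ρ) K →ₗ[ℝ] fixedSubmodule ρ (N.conjSubgroupOf x K) :=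
  LinearMap.codRestrict _
    ((LinearMap.proj x).comp ((indCarrier N ρ).subtype.comp (fixedSubmodule _ K).subtype))
    fun f => apply_mem_fixedSubmodule f.2 x

theorem injective_pi_evalFixed [N.Normal] (K : Subgroup G) {ι : Type} (pts : ι → G)
    (hpts : ∀ y, ∃ i, (pts i)⁻¹ * y ∈ N ⊔ K) :
    Function.Injective (LinearMap.pi fun i => evalFixed ρ K (pts i)) := by
  refine (injective_iff_map_eq_zero _).mpr fun f hf => ?_
  ext y
  obtain ⟨i, hi⟩ := hpts y
  have h0 : ((f : indCarrier N ρ) : G → V) (pts i) = 0 :=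
    congrArg Subtype.val (congrFun hf i)
  exact apply_eq_zero_of_inv_mul_mem_sup f.2 hi h0

theorem fixedDim_indRep_le_sum [N.Normal] [FiniteDimensional ℝ V] (K : Subgroup G) {ι : Type}
    [Fintype ι] (pts : ι → G) (hpts : ∀ y, ∃ i, (pts i)⁻¹ * y ∈ N ⊔ K) :
    fixedDim (indRep N ρ) K ≤ ∑ i, fixedDim ρ (N.conjSubgroupOf (pts i) K) :=
  (LinearMap.finrank_le_finrank_of_injective (injective_pi_evalFixed ρ K pts hpts)).trans_eq
    (Module.finrank_pi_fintype ℝ)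

open Classical in
noncomputable def spike (x : G) : V →ₗ[ℝ] indCarrier N ρ where
  toFun w := ⟨fun y => if h : y * x⁻¹ ∈ N then ρ ⟨_, h⟩ w else 0, fun n y => by
    by_cases h : y * x⁻¹ ∈ N
    · have hn : (n : G) * y * x⁻¹ ∈ N := by simpa [mul_assoc] using mul_mem n.2 h
      simp only [dif_pos h, dif_pos hn, ← Module.End.mul_apply, ← map_mul]
      congr 2
      ext
      simp [mul_assoc]
    · have hn : (n : G) * y * x⁻¹ ∉ N := by simpa [mul_assoc, mul_mem_cancel_left n.2] using h
      simp only [dif_neg h, dif_neg hn, map_zero]⟩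
  map_add' w w' := by ext y; dsimp; split_ifs <;> simp
  map_smul' c w := by ext y; dsimp; split_ifs <;> simp

variable {ρ}

theorem spike_apply_of_mem {x y : G} (h : y * x⁻¹ ∈ N) (w : V) :
    (spike ρ x w : G → V) y = ρ ⟨_, h⟩ w :=
  dif_pos h

theorem spike_apply_of_not_mem {x y : G} (h : y * x⁻¹ ∉ N) (w : V) :
    (spike ρ x w : G → V) y = 0 :=
  dif_neg h

variable (ρ) [Fintype G]

open Classical in
noncomputable def liftFixed (P : Subgroup G) (x : G) : V →ₗ[ℝ] fixedSubmodule (indRep N ρ) P :=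
  LinearMap.codRestrict _ (∑ p : P, (indRep N ρ p).comp (spike ρ x)) fun w => by
    simpa using sum_mem_fixedSubmodule (indRep N ρ) P (spike ρ x w)

open Classical in
theorem liftFixed_apply (P : Subgroup G) (x : G) (w : V) (y : G) :
    ((liftFixed ρ P x w : indCarrier N ρ) : G → V) y = ∑ p : P, (spike ρ x w : G → V) (y * p) := by
  simp [liftFixed, indRep_apply_apply]

variable {ρ}

theorem liftFixed_apply_eq_zero [N.Normal] {P : Subgroup G} {x y : G} (h : x⁻¹ * y ∉ N ⊔ P)
    (w : V) : ((liftFixed ρ P x w : indCarrier N ρ) : G → V) y = 0 := by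
  classical
  rw [liftFixed_apply]
  refine Finset.sum_eq_zero fun p _ => spike_apply_of_not_mem (fun hN => h ?_) w
  have hconj : x⁻¹ * (y * p * x⁻¹) * x ∈ N := by simpa using Normal.conj_mem ‹_› _ hN x⁻¹
  rw [show x⁻¹ * y = x⁻¹ * (y * p * x⁻¹) * x * (p : G)⁻¹ by group]
  exact mul_mem_sup hconj (inv_mem p.2)

theorem liftFixed_apply_self {P : Subgroup G} {x : G} {w : V}
    (hw : w ∈ fixedSubmodule ρ (N.conjSubgroupOf x P)) :
    ∃ m : ℕ, 0 < m ∧ ((liftFixed ρ P x w : indCarrier N ρ) : G → V) x = m • w := by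
  classical
  have hterm (p : P) : (spike ρ x w : G → V) (x * p) = if x * p * x⁻¹ ∈ N then w else 0 := by
    split_ifs with h
    · exact (spike_apply_of_mem h w).trans (hw _ (by simp [mul_assoc]))
    · exact spike_apply_of_not_mem h w
  refine ⟨(Finset.univ.filter fun p : P => x * p * x⁻¹ ∈ N).card,
    Finset.card_pos.mpr ⟨1, by simp⟩, ?_⟩
  simp only [liftFixed_apply, hterm, Finset.sum_ite, Finset.sum_const, smul_zero, add_zero]

variable (ρ)

noncomputable def liftPi (P : Subgroup G) {ι : Type} [Fintype ι] (pts : ι → G) :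
    (∀ i, fixedSubmodule ρ (N.conjSubgroupOf (pts i) P)) →ₗ[ℝ] fixedSubmodule (indRep N ρ) P :=
  ∑ i, (liftFixed ρ P (pts i)).comp ((Submodule.subtype _).comp (LinearMap.proj i))

theorem liftPi_injective [N.Normal] (P : Subgroup G) {ι : Type} [Fintype ι] (pts : ι → G)
    (hpts : ∀ i j, (pts i)⁻¹ * pts j ∈ N ⊔ P → i = j) : Function.Injective (liftPi ρ P pts) := by
  refine (injective_iff_map_eq_zero _).mpr fun v hv => funext fun j => ?_
  obtain ⟨m, hm, hval⟩ := liftFixed_apply_self (v j).2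
  have hsum : ∑ i, ((liftFixed ρ P (pts i) (v i) : indCarrier N ρ) : G → V) (pts j) = 0 := by
    simpa [liftPi] using congrFun (congrArg (fun f : fixedSubmodule (indRep N ρ) P =>
      ((f : indCarrier N ρ) : G → V)) hv) (pts j)
  rw [Finset.sum_eq_single j (fun i _ hij => liftFixed_apply_eq_zero (fun h => hij (hpts i j h)) _)
    (by simp), hval, ← Nat.cast_smul_eq_nsmul ℝ] at hsum
  exact Subtype.ext ((smul_eq_zero.mp hsum).resolve_left (Nat.cast_ne_zero.mpr hm.ne'))

theorem sum_fixedDim_le_fixedDim_indRep [N.Normal] [FiniteDimensional ℝ V] (P : Subgroup G)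
    {ι : Type} [Fintype ι] (pts : ι → G) (hpts : ∀ i j, (pts i)⁻¹ * pts j ∈ N ⊔ P → i = j) :
    ∑ i, fixedDim ρ (N.conjSubgroupOf (pts i) P) ≤ fixedDim (indRep N ρ) P :=
  (Module.finrank_pi_fintype ℝ).symm.trans_le
    (LinearMap.finrank_le_finrank_of_injective (liftPi_injective ρ P pts hpts))

end Induced

open Induced in
theorem statement13_general {G : Type} [Group G] [Fintype G] (N : Subgroup G) [N.Normal]
    {V : Type} [AddCommGroup V] [Module ℝ V] [FiniteDimensional ℝ V]
    (ρ : Representation ℝ ↥N V)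
    (hgap : ∀ P K : Subgroup ↥N, IsPrimePowerOrder (Nat.card ↥P) → P < K →
      2 * fixedDim ρ K ≤ fixedDim ρ P) :
    ∀ P K : Subgroup G, IsPrimePowerOrder (Nat.card ↥P) → P < K →
      2 * fixedDim (indRep N ρ) K ≤ fixedDim (indRep N ρ) P := by
  classical
  intro P K hP hPK
  have hcover := fixedDim_indRep_le_sum ρ K (fun c : G ⧸ (N ⊔ K) => c.out)
    (QuotientGroup.exists_out_inv_mul_mem _)
  have hdistinct (c c' : G ⧸ (N ⊔ K)) (h : c.out⁻¹ * c'.out ∈ N ⊔ K) : c = c' :=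
    QuotientGroup.eq_of_out_inv_mul_out_mem h
  have hsup : N ⊔ P ≤ N ⊔ K := sup_le_sup_left hPK.le N
  rcases N.inf_lt_inf_or_sup_lt_sup hPK with hlt | hlt
  · calc 2 * fixedDim (indRep N ρ) K
        ≤ ∑ c : G ⧸ (N ⊔ K), 2 * fixedDim ρ (N.conjSubgroupOf c.out K) := by
          rw [← Finset.mul_sum]; gcongr
      _ ≤ ∑ c : G ⧸ (N ⊔ K), fixedDim ρ (N.conjSubgroupOf c.out P) :=
          Finset.sum_le_sum fun c _ => hgap _ _ (isPrimePowerOrder_card_conjSubgroupOf _ hP)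
            (conjSubgroupOf_lt_conjSubgroupOf _ hPK.le hlt)
      _ ≤ fixedDim (indRep N ρ) P :=
          sum_fixedDim_le_fixedDim_indRep ρ P _ fun c c' h => hdistinct c c' (hsup h)
  · obtain ⟨m, hmK, hmP⟩ := SetLike.exists_of_lt hlt
    have hcover' := fixedDim_indRep_le_sum ρ K (fun c : G ⧸ (N ⊔ K) => c.out * m) fun y => by
      obtain ⟨c, hc⟩ := QuotientGroup.exists_out_inv_mul_mem (N ⊔ K) y
      exact ⟨c, by simpa [mul_assoc] using mul_mem (inv_mem hmK) hc⟩
    have hanti (x : G) := fixedDim_anti ρ (N.conjSubgroupOf_mono x hPK.le)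
    calc 2 * fixedDim (indRep N ρ) K
        ≤ ∑ c : G ⧸ (N ⊔ K), fixedDim ρ (N.conjSubgroupOf c.out P)
          + ∑ c : G ⧸ (N ⊔ K), fixedDim ρ (N.conjSubgroupOf (c.out * m) P) := by
          rw [two_mul]
          gcongr
          · exact hcover.trans (Finset.sum_le_sum fun c _ => hanti _)
          · exact hcover'.trans (Finset.sum_le_sum fun c _ => hanti _)
      _ ≤ fixedDim (indRep N ρ) P := by
          simpa only [Fintype.sum_sum_type, Sum.elim_inl, Sum.elim_inr] using
            sum_fixedDim_le_fixedDim_indRep ρ P _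
              (eq_of_sumElim_inv_mul_mem hsup hmK hmP hdistinct)

theorem statement13 {G : Type} [Group G] [Fintype G] (N : Subgroup G) [N.Normal]
    (hreal : ∀ n x : ↥N,
      (IsConj (n : G) (x : G) ∨ IsConj ((n : G))⁻¹ (x : G)) ↔ (IsConj n x ∨ IsConj n⁻¹ x))
    {V : Type} [AddCommGroup V] [Module ℝ V] [FiniteDimensional ℝ V]
    (ρ : Representation ℝ ↥N V)
    (hgap : ∀ P K : Subgroup ↥N, IsPrimePowerOrder (Nat.card ↥P) → P < K →
      2 * fixedDim ρ K ≤ fixedDim ρ P) :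
    ∀ P K : Subgroup G, IsPrimePowerOrder (Nat.card ↥P) → P < K →
      2 * fixedDim (indRep N ρ) K ≤ fixedDim (indRep N ρ) P :=
  statement13_general N ρ hgap
end

section
/- Let G be a finite group and N a normal subgroup of G such that for every n ∈ N one has (n)^±_G ∩ N = (n)^±_N. Let V be a finite-dimensional real representation of N satisfying: (2) for every subgroup P of N of prime power order and every P < K ≤ N, dim_ℝ V^P ≥ 2 · dim_ℝ V^K; (3) dim_ℝ V^P ≥ 5 for every subgroup P of N of prime power order, and dim_ℝ V^K ≥ 2 for every pseudocyclic subgroup K of N; (4) for every pseudocyclic subgroup K of N and every K < K' ≤ N, dim_ℝ V^{K'} < dim_ℝ V^K. Then the induced representation W = Ind_N^G(V) satisfies the corresponding conditions (2), (3) and (4) over G. -/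
/-- A finite group is pseudocyclic if for some prime `p` it contains a normal `p`-subgroup
`P` such that the quotient `K ⧸ P` is cyclic. -/
def IsPseudocyclic (K : Type) [Group K] : Prop :=
  ∃ (p : ℕ) (P : Subgroup K) (hP : P.Normal), Nat.Prime p ∧
    (∃ k : ℕ, Nat.card ↥P = p ^ k) ∧ (haveI := hP; IsCyclic (K ⧸ P))

variable {G : Type} [Group G]

/-!
Since `N` is normal, the double cosets `N x K` are the cosets of `N ⊔ K`, and Mackey's
decomposition identifies `W^K` with `⨁_{x ∈ G/(N ⊔ K)} V^{x (K ∩ N) x⁻¹}`. The dimension of `V^L`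
is the average over `L` of the character `χ` of `V`; as `L` is closed under inversion, only
`χ n + χ n⁻¹` matters, and the hypothesis on real conjugacy classes makes this function invariant
under conjugation by `G`. Hence `dim W^K = [G : N ⊔ K] · dim V^{K ∩ N}`. Intersecting with `N`
preserves prime power order and pseudocyclicity, and for `P < K` either `P ∩ N < K ∩ N`, or
`P ∩ N = K ∩ N` and `N ⊔ P < N ⊔ K`, so that `[G : N ⊔ P] ≥ 2 [G : N ⊔ K]`; the conditions over `N`
therefore pass to `W`.
-/

lemma IsPrimePowerOrder.of_dvd {m n : ℕ} (hn : IsPrimePowerOrder n) (hmn : m ∣ n) :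
    IsPrimePowerOrder m := by
  obtain ⟨p, k, hp, rfl⟩ := hn
  obtain ⟨j, -, rfl⟩ := (Nat.dvd_prime_pow hp).1 hmn
  exact ⟨p, j, hp, rfl⟩

lemma IsPseudocyclic.of_injective {L K : Type} [Group L] [Group K] (hK : IsPseudocyclic K)
    (f : L →* K) (hf : Function.Injective f) : IsPseudocyclic L := by
  obtain ⟨p, P, hP, hp, ⟨k, hk⟩, hcyc⟩ := hK
  let φ : L →* K ⧸ P := (QuotientGroup.mk' P).comp f
  have hker : φ.ker = P.comap f := by
    ext x
    simp [φ, QuotientGroup.eq_one_iff]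
  refine ⟨p, φ.ker, inferInstance, hp, ?_, ?_⟩
  · obtain ⟨j, -, hj⟩ := (Nat.dvd_prime_pow hp).1
      (hk ▸ hker ▸ Subgroup.card_comap_dvd_of_injective P f hf)
    exact ⟨j, hj⟩
  · exact isCyclic_of_surjective _ (QuotientGroup.quotientKerEquivRange φ).symm.surjective

namespace Subgroup

def subgroupOfInclusion (K N : Subgroup G) : K.subgroupOf N →* K :=
  (N.subtype.comp (K.subgroupOf N).subtype).codRestrict K fun n => mem_subgroupOf.1 n.2

lemma subgroupOfInclusion_injective (K N : Subgroup G) :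
    Function.Injective (subgroupOfInclusion K N) :=
  fun _ _ h => Subtype.ext (Subtype.ext (congrArg Subtype.val h :))

lemma isPrimePowerOrder_card_subgroupOf {K : Subgroup G} (N : Subgroup G)
    (hK : IsPrimePowerOrder (Nat.card K)) : IsPrimePowerOrder (Nat.card (K.subgroupOf N)) :=
  hK.of_dvd (card_dvd_of_injective _ (subgroupOfInclusion_injective K N))

lemma isPseudocyclic_subgroupOf {K : Subgroup G} (N : Subgroup G) (hK : IsPseudocyclic K) :
    IsPseudocyclic (K.subgroupOf N) :=
  hK.of_injective _ (subgroupOfInclusion_injective K N)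

lemma two_mul_index_le_of_lt [Finite G] {H K : Subgroup G} (h : H < K) :
    2 * K.index ≤ H.index := by
  obtain ⟨m, hm⟩ := index_dvd_of_le h.le
  have hpos : 0 < K.index := Nat.pos_of_ne_zero FiniteIndex.index_ne_zero
  have hm1 : 1 < m := (Nat.lt_mul_iff_one_lt_right hpos).1 (hm ▸ index_strictAnti h)
  rw [hm, mul_comm 2]
  exact Nat.mul_le_mul_left _ hm1

lemma sup_lt_sup_of_lt_of_subgroupOf_eq {N H K : Subgroup G} [N.Normal] (h : H < K)
    (heq : H.subgroupOf N = K.subgroupOf N) : N ⊔ H < N ⊔ K := by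
  refine lt_of_le_of_ne (sup_le_sup_left h.le N) fun hsup => h.not_ge fun x hx => ?_
  obtain ⟨n, hn, y, hy, rfl⟩ := mem_sup_of_normal_left.1 (hsup ▸ mem_sup_right hx : x ∈ N ⊔ H)
  have hnK : (⟨n, hn⟩ : N) ∈ K.subgroupOf N :=
    mem_subgroupOf.2 (by simpa using mul_mem hx (inv_mem (h.le hy)))
  exact mul_mem (mem_subgroupOf.1 (heq ▸ hnK)) hy

lemma subgroupOf_lt_or_two_mul_index_le [Finite G] (N : Subgroup G) [N.Normal] {P K : Subgroup G}
    (h : P < K) : P.subgroupOf N < K.subgroupOf N ∨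
      P.subgroupOf N = K.subgroupOf N ∧ 2 * (N ⊔ K).index ≤ (N ⊔ P).index := by
  refine (subgroupOf_mono N h.le).lt_or_eq.imp_right fun heq => ⟨heq, ?_⟩
  exact two_mul_index_le_of_lt (sup_lt_sup_of_lt_of_subgroupOf_eq h heq)

end Subgroup

section Character

variable {H : Type} [Group H] {V : Type} [AddCommGroup V] [Module ℝ V]
  (ρ : Representation ℝ H V)

lemma fixedSubmodule_eq_invariants (L : Subgroup H) :
    fixedSubmodule ρ L = Representation.invariants (ρ.comp L.subtype) := by
  ext v
  exact ⟨fun hv g => hv g g.2, fun hv g hg => hv ⟨g, hg⟩⟩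

lemma fixedDim_eq_average_character [FiniteDimensional ℝ V] (L : Subgroup H) [Fintype L] :
    (fixedDim ρ L : ℝ) = (Nat.card L : ℝ)⁻¹ * ∑ l : L, ρ.character l := by
  have : Invertible (Nat.card L : ℝ) := invertibleOfNonzero (Nat.cast_ne_zero.2 Nat.card_pos.ne')
  rw [fixedDim, fixedSubmodule_eq_invariants,
    ← Representation.card_inv_mul_sum_char_eq_finrank]
  rfl

lemma two_mul_sum_character (L : Subgroup H) [Fintype L] :
    2 * ∑ l : L, ρ.character l = ∑ l : L, (ρ.character l + ρ.character l⁻¹) := by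
  rw [Finset.sum_add_distrib, two_mul,
    ← Fintype.sum_equiv (Equiv.inv L) (fun l => ρ.character (l : H)⁻¹) _ fun _ => rfl]

lemma fixedDim_map_eq_of_character_add_inv [FiniteDimensional ℝ V] (c : H ≃* H)
    (hc : ∀ h, ρ.character (c h) + ρ.character (c h)⁻¹ = ρ.character h + ρ.character h⁻¹)
    [Finite H] (L : Subgroup H) : fixedDim ρ (L.map c.toMonoidHom) = fixedDim ρ L := by
  classical
  have : Fintype H := Fintype.ofFinite H
  let e := L.equivMapOfInjective c.toMonoidHom c.injective
  have hcard : Nat.card (L.map c.toMonoidHom) = Nat.card L := (Nat.card_congr e.toEquiv).symm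
  have hsum : ∑ l : L.map c.toMonoidHom, ρ.character l = ∑ l : L, ρ.character l := by
    refine mul_left_cancel₀ two_ne_zero ?_
    rw [two_mul_sum_character, two_mul_sum_character,
      ← Fintype.sum_equiv e.toEquiv (fun l : L => ρ.character (c l) + ρ.character (c l)⁻¹) _
        fun _ => rfl]
    exact Fintype.sum_congr _ _ fun l => hc l
  exact_mod_cast (fixedDim_eq_average_character ρ _).trans
    ((congrArg₂ _ (by rw [hcard]) hsum).trans (fixedDim_eq_average_character ρ L).symm)

end Character

section Mackey

variable {N : Subgroup G} {V : Type} [AddCommGroup V] [Module ℝ V]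
  (ρ : Representation ℝ N V)

lemma indRep_fixed_apply_mul {K : Subgroup G} {f : indCarrier N ρ}
    (hf : f ∈ fixedSubmodule (indRep N ρ) K) (y : G) {k : G} (hk : k ∈ K) :
    f.1 (y * k) = f.1 y :=
  congrFun (congrArg Subtype.val (hf k hk)) y

lemma indRep_fixed_apply_mul_mul {K : Subgroup G} {f : indCarrier N ρ}
    (hf : f ∈ fixedSubmodule (indRep N ρ) K) (m : N) (x : G) {k : G} (hk : k ∈ K) :
    f.1 (m * x * k) = ρ m (f.1 x) := by
  rw [indRep_fixed_apply_mul ρ hf _ hk]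
  exact f.2 m x

variable [hN : N.Normal]

lemma character_add_inv_conjNormal
    (hreal : ∀ n x : N, IsConj (n : G) (x : G) → IsConj n x ∨ IsConj n⁻¹ x) (x : G) (n : N) :
    ρ.character (MulAut.conjNormal x n) + ρ.character (MulAut.conjNormal x n)⁻¹ =
      ρ.character n + ρ.character n⁻¹ := by
  have hG : IsConj (n : G) (MulAut.conjNormal x n : G) :=
    isConj_iff.2 ⟨x, (MulAut.conjNormal_apply x n).symm⟩
  rcases hreal _ _ hG with h | h <;> obtain ⟨c, hc⟩ := isConj_iff.1 h <;> rw [← hc, conj_inv]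
  · simp
  · simp [add_comm]

variable (N) in
def conjSubgroupOf (K : Subgroup G) (x : G) : Subgroup N :=
  (K.subgroupOf N).map (MulAut.conjNormal x).toMonoidHom

lemma mem_conjSubgroupOf {K : Subgroup G} {x : G} {n : N} :
    n ∈ conjSubgroupOf N K x ↔ x⁻¹ * n * x ∈ K := by
  rw [conjSubgroupOf, Subgroup.mem_map_equiv, Subgroup.mem_subgroupOf,
    MulAut.conjNormal_symm_apply]

lemma fixedDim_conjSubgroupOf [Finite G] [FiniteDimensional ℝ V]
    (hreal : ∀ n x : N, IsConj (n : G) (x : G) → IsConj n x ∨ IsConj n⁻¹ x)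
    (K : Subgroup G) (x : G) :
    fixedDim ρ (conjSubgroupOf N K x) = fixedDim ρ (K.subgroupOf N) :=
  fixedDim_map_eq_of_character_add_inv ρ _ (character_add_inv_conjNormal ρ hreal x) _

lemma indRep_fixed_apply_mem {K : Subgroup G} {f : indCarrier N ρ}
    (hf : f ∈ fixedSubmodule (indRep N ρ) K) (x : G) :
    f.1 x ∈ fixedSubmodule ρ (conjSubgroupOf N K x) := by
  intro n hn
  calc ρ n (f.1 x) = f.1 (n * x) := (f.2 n x).symm
    _ = f.1 (x * (x⁻¹ * n * x)) := by group
    _ = f.1 x := indRep_fixed_apply_mul ρ hf x (mem_conjSubgroupOf.1 hn)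

lemma apply_eq_apply_of_mul_mul_eq {K : Subgroup G} {x : G} {v : V}
    (hv : v ∈ fixedSubmodule ρ (conjSubgroupOf N K x)) {m₁ m₂ : N} {k₁ k₂ : G}
    (hk₁ : k₁ ∈ K) (hk₂ : k₂ ∈ K) (h : m₁ * x * k₁ = m₂ * x * k₂) : ρ m₁ v = ρ m₂ v := by
  have hconj : x⁻¹ * ((m₂⁻¹ * m₁ : N) : G) * x = k₂ * k₁⁻¹ := by
    rw [show k₂ = x⁻¹ * (m₂ : G)⁻¹ * (m₁ * x * k₁) by rw [h]; group]
    simp only [Subgroup.coe_mul, Subgroup.coe_inv]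
    group
  have hmem : m₂⁻¹ * m₁ ∈ conjSubgroupOf N K x :=
    mem_conjSubgroupOf.2 (hconj ▸ mul_mem hk₂ (inv_mem hk₁))
  calc ρ m₁ v = ρ m₂ (ρ (m₂⁻¹ * m₁) v) := by
        rw [← Module.End.mul_apply, ← map_mul, mul_inv_cancel_left]
    _ = ρ m₂ v := by rw [hv _ hmem]

lemma mk_mul_mul_eq_mk (K : Subgroup G) {m k : G} (hm : m ∈ N) (hk : k ∈ K) (x : G) :
    (QuotientGroup.mk (m * x * k) : G ⧸ (N ⊔ K)) = QuotientGroup.mk x := by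
  refine (QuotientGroup.eq.2 ?_).symm
  have hconj : x⁻¹ * m * x ∈ N ⊔ K := Subgroup.mem_sup_left (hN.conj_mem' m hm x)
  simpa [mul_assoc] using mul_mem hconj (Subgroup.mem_sup_right hk)

lemma exists_eq_mul_mul_of_inv_mul_mem {K : Subgroup G} {x y : G} (h : x⁻¹ * y ∈ N ⊔ K) :
    ∃ m : N, ∃ k ∈ K, y = m * x * k := by
  obtain ⟨n, hn, k, hk, hnk⟩ := Subgroup.mem_sup_of_normal_left.1 h
  refine ⟨⟨x * n * x⁻¹, hN.conj_mem n hn x⟩, k, hk, ?_⟩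
  rw [Subgroup.coe_mk, show x * n * x⁻¹ * x * k = x * (n * k) by group, hnk]
  group

variable (N) in
lemma exists_eq_mul_out_mul (K : Subgroup G) (y : G) :
    ∃ m : N, ∃ k ∈ K, y = m * (QuotientGroup.mk y : G ⧸ (N ⊔ K)).out * k :=
  exists_eq_mul_mul_of_inv_mul_mem (QuotientGroup.eq.1 (QuotientGroup.out_eq' _))

variable (K : Subgroup G) (v : (q : G ⧸ (N ⊔ K)) → fixedSubmodule ρ (conjSubgroupOf N K q.out))

noncomputable def mackeyGlue : G → V :=
  fun y => ρ (Classical.choose (exists_eq_mul_out_mul N K y)) (v (QuotientGroup.mk y))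

variable {K} in
lemma mackeyGlue_eq {y : G} {q : G ⧸ (N ⊔ K)} {m : N} {k : G} (hk : k ∈ K)
    (hy : y = m * q.out * k) : mackeyGlue ρ K v y = ρ m (v q) := by
  have hq : QuotientGroup.mk y = q := by
    rw [hy, mk_mul_mul_eq_mk K m.2 hk, QuotientGroup.out_eq']
  subst hq
  obtain ⟨k', hk', hy'⟩ := Classical.choose_spec (exists_eq_mul_out_mul N K y)
  exact apply_eq_apply_of_mul_mul_eq ρ (v _).2 hk' hk (hy'.symm.trans hy)

lemma mackeyGlue_mem_indCarrier : mackeyGlue ρ K v ∈ indCarrier N ρ := by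
  intro h y
  obtain ⟨m, k, hk, hy⟩ := exists_eq_mul_out_mul N K y
  have hhy : h * y = ↑(h * m) * (QuotientGroup.mk y : G ⧸ (N ⊔ K)).out * k := by
    conv_lhs => rw [hy]
    simp only [Subgroup.coe_mul, mul_assoc]
  rw [mackeyGlue_eq ρ v hk hy, mackeyGlue_eq ρ v hk hhy, map_mul, Module.End.mul_apply]

lemma mackeyGlue_mul {k' : G} (hk' : k' ∈ K) (y : G) :
    mackeyGlue ρ K v (y * k') = mackeyGlue ρ K v y := by
  obtain ⟨m, k, hk, hy⟩ := exists_eq_mul_out_mul N K y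
  have hyk : y * k' = m * (QuotientGroup.mk y : G ⧸ (N ⊔ K)).out * (k * k') := by
    conv_lhs => rw [hy]
    simp only [mul_assoc]
  rw [mackeyGlue_eq ρ v hk hy, mackeyGlue_eq ρ v (mul_mem hk hk') hyk]

noncomputable def mackeyEquiv :
    fixedSubmodule (indRep N ρ) K ≃ₗ[ℝ]
      ((q : G ⧸ (N ⊔ K)) → fixedSubmodule ρ (conjSubgroupOf N K q.out)) where
  toFun f q := ⟨f.1.1 q.out, indRep_fixed_apply_mem ρ f.2 q.out⟩
  map_add' _ _ := rfl
  map_smul' _ _ := rfl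
  invFun v := ⟨⟨mackeyGlue ρ K v, mackeyGlue_mem_indCarrier ρ K v⟩,
    fun _ hk => Subtype.ext (funext (mackeyGlue_mul ρ K v hk))⟩
  left_inv f := by
    refine Subtype.ext (Subtype.ext (funext fun y => ?_))
    obtain ⟨m, k, hk, hy⟩ := exists_eq_mul_out_mul N K y
    change mackeyGlue ρ K (fun q => ⟨f.1.1 q.out, indRep_fixed_apply_mem ρ f.2 q.out⟩) y = f.1.1 y
    refine (mackeyGlue_eq ρ _ hk hy).trans ?_
    conv_rhs => rw [hy]
    exact (indRep_fixed_apply_mul_mul ρ f.2 m _ hk).symm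
  right_inv v := funext fun q => Subtype.ext <|
    (mackeyGlue_eq ρ v (q := q) (m := 1) (one_mem K) (by simp)).trans (by simp)

lemma fixedDim_indRep [Finite G] [FiniteDimensional ℝ V]
    (hreal : ∀ n x : N, IsConj (n : G) (x : G) → IsConj n x ∨ IsConj n⁻¹ x) :
    fixedDim (indRep N ρ) K = (N ⊔ K).index * fixedDim ρ (K.subgroupOf N) := by
  have : Fintype (G ⧸ (N ⊔ K)) := Fintype.ofFinite _
  rw [fixedDim, (mackeyEquiv ρ K).finrank_eq, Module.finrank_pi_fintype,
    Finset.sum_congr rfl fun q _ => fixedDim_conjSubgroupOf ρ hreal K q.out, Finset.sum_const,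
    Finset.card_univ, smul_eq_mul, Subgroup.index_eq_card, Nat.card_eq_fintype_card]

end Mackey

theorem statement14 {G : Type} [Group G] [Fintype G] (N : Subgroup G) [N.Normal]
    (hreal : ∀ n x : ↥N,
      (IsConj (n : G) (x : G) ∨ IsConj ((n : G))⁻¹ (x : G)) ↔ (IsConj n x ∨ IsConj n⁻¹ x))
    {V : Type} [AddCommGroup V] [Module ℝ V] [FiniteDimensional ℝ V]
    (ρ : Representation ℝ ↥N V)
    (h2 : ∀ P K : Subgroup ↥N, IsPrimePowerOrder (Nat.card ↥P) → P < K →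
      2 * fixedDim ρ K ≤ fixedDim ρ P)
    (h3 : (∀ P : Subgroup ↥N, IsPrimePowerOrder (Nat.card ↥P) → 5 ≤ fixedDim ρ P) ∧
      (∀ K : Subgroup ↥N, IsPseudocyclic ↥K → 2 ≤ fixedDim ρ K))
    (h4 : ∀ K K' : Subgroup ↥N, IsPseudocyclic ↥K → K < K' →
      fixedDim ρ K' < fixedDim ρ K) :
    (∀ P K : Subgroup G, IsPrimePowerOrder (Nat.card ↥P) → P < K →
      2 * fixedDim (indRep N ρ) K ≤ fixedDim (indRep N ρ) P) ∧
    ((∀ P : Subgroup G, IsPrimePowerOrder (Nat.card ↥P) → 5 ≤ fixedDim (indRep N ρ) P) ∧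
      (∀ K : Subgroup G, IsPseudocyclic ↥K → 2 ≤ fixedDim (indRep N ρ) K)) ∧
    (∀ K K' : Subgroup G, IsPseudocyclic ↥K → K < K' →
      fixedDim (indRep N ρ) K' < fixedDim (indRep N ρ) K) := by
  have hdim (K : Subgroup G) := fixedDim_indRep ρ K fun n x h => (hreal n x).1 (Or.inl h)
  have hpos (K : Subgroup G) : 0 < (N ⊔ K).index :=
    Nat.pos_of_ne_zero Subgroup.FiniteIndex.index_ne_zero
  have hle (K : Subgroup G) : fixedDim ρ (K.subgroupOf N) ≤ fixedDim (indRep N ρ) K :=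
    hdim K ▸ Nat.le_mul_of_pos_left _ (hpos K)
  refine ⟨fun P K hP hPK => ?_, ⟨fun P hP => ?_, fun K hK => ?_⟩, fun K K' hK hKK' => ?_⟩
  · have hind := Subgroup.index_antitone (sup_le_sup_left hPK.le N)
    rw [hdim, hdim]
    rcases Subgroup.subgroupOf_lt_or_two_mul_index_le N hPK with hlt | ⟨heq, hind2⟩
    · calc 2 * ((N ⊔ K).index * fixedDim ρ (K.subgroupOf N))
          = (N ⊔ K).index * (2 * fixedDim ρ (K.subgroupOf N)) := by ring
        _ ≤ (N ⊔ P).index * fixedDim ρ (P.subgroupOf N) :=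
          Nat.mul_le_mul hind (h2 _ _ (Subgroup.isPrimePowerOrder_card_subgroupOf N hP) hlt)
    · rw [heq, ← mul_assoc]
      exact Nat.mul_le_mul_right _ hind2
  · exact (h3.1 _ (Subgroup.isPrimePowerOrder_card_subgroupOf N hP)).trans (hle P)
  · exact (h3.2 _ (Subgroup.isPseudocyclic_subgroupOf N hK)).trans (hle K)
  · have hK' := Subgroup.isPseudocyclic_subgroupOf N hK
    have hind := Subgroup.index_antitone (sup_le_sup_left hKK'.le N)
    rw [hdim, hdim]
    rcases Subgroup.subgroupOf_lt_or_two_mul_index_le N hKK' with hlt | ⟨heq, hind2⟩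
    · exact (Nat.mul_le_mul_right _ hind).trans_lt
        (Nat.mul_lt_mul_of_pos_left (h4 _ _ hK' hlt) (hpos K))
    · have := hpos K'
      rw [← heq]
      exact Nat.mul_lt_mul_of_pos_right (by omega) (by have := h3.2 _ hK'; omega)
end
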